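/- arXiv:2010.06753 — 2 statements merged into one kernel-verified Lean document; each statement's English description precedes it below -/
import Mathlib

section
/- Let f : A → B be a surjective homomorphism of finitely generated abelian groups such that for every prime p and every positive integer r, the induced map Tor₁(A, ℤ/pʳ) → Tor₁(B, ℤ/pʳ) is surjective. Then f admits a section, i.e., there exists a homomorphism s : B → A with f ∘ s = id_B. -/
/-!
Tensoring the resolution `0 → ℤ --n--> ℤ → ℤ/n → 0` with `M` identifies `Tor₁(M, ℤ/n)` with the
`n`-torsion of `M`, so the hypothesis says that every `pʳ`-torsion element of `B` lifts to a
`pʳ`-torsion element of `A`. By the structure theorem `B ≃ ℤᵐ × ⨁ ℤ/pᵢ^eᵢ`: the free summand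
lifts because it is projective, and each `ℤ/pᵉ` lifts by sending its generator to a lift of the
same order.
-/

open CategoryTheory Limits MonoidalCategory
open scoped DirectSum

noncomputable section

universe u

namespace HomologicalComplex

lemma epi_cyclesMap_of_epi_homologyMap {C : Type*} [Category C] [HasZeroMorphisms C]
    [CategoryWithHomology C] {ι : Type*} {c : ComplexShape ι} {K L : HomologicalComplex C c}
    (φ : K ⟶ L) (i j : ι) (hij : c.prev j = i) (hL : L.d i j = 0) [Epi (homologyMap φ j)] :
    Epi (cyclesMap φ j) := by
  have := L.isIso_homologyπ i j hij hL
  have hφ : cyclesMap φ j = (K.homologyπ j ≫ homologyMap φ j) ≫ inv (L.homologyπ j) := by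
    simp
  rw [hφ]
  infer_instance

lemma exists_lift_of_epi_cyclesMap {R : Type u} [Ring R] {ι : Type*}
    {c : ComplexShape ι} {K L : HomologicalComplex (ModuleCat.{u} R) c} (φ : K ⟶ L) (i j : ι)
    (hij : c.next i = j) [Epi (cyclesMap φ i)] (y : L.X i) (hy : L.d i j y = 0) :
    ∃ x : K.X i, K.d i j x = 0 ∧ φ.f i x = y := by
  let k : ModuleCat.of R R ⟶ L.X i := ModuleCat.ofHom (LinearMap.toSpanSingleton R _ y)
  have hk : k ≫ L.d i j = 0 := by
    ext
    simpa [k] using hy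
  obtain ⟨z, hz⟩ := (ModuleCat.epi_iff_surjective _).1 ‹_› (L.liftCycles k j hij hk (1 : R))
  refine ⟨K.iCycles i z, ConcreteCategory.congr_hom (K.iCycles_d i j) z, ?_⟩
  calc φ.f i (K.iCycles i z) = L.iCycles i (cyclesMap φ i z) :=
        (ConcreteCategory.congr_hom (cyclesMap_i φ i) z).symm
    _ = k (1 : R) := by rw [hz]; exact ConcreteCategory.congr_hom (L.liftCycles_i k j hij hk) _
    _ = y := one_smul R y

end HomologicalComplex

namespace CategoryTheory.ProjectiveResolution

lemma epi_homologyMap_of_epi_leftDerived {C D : Type*} [Category C] [Category D] [Abelian C]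
    [HasProjectiveResolutions C] [Abelian D] {F G : C ⥤ D}
    [F.Additive] [G.Additive] (α : F ⟶ G) {X : C} (P : ProjectiveResolution X) (n : ℕ)
    [Epi ((NatTrans.leftDerived α n).app X)] :
    Epi (HomologicalComplex.homologyMap
      ((NatTrans.mapHomologicalComplex α _).app P.complex) n) := by
  have h : Epi ((P.isoLeftDerivedObj F n).hom ≫
      (HomologicalComplex.homologyFunctor D _ n).map
        ((NatTrans.mapHomologicalComplex α _).app P.complex) ≫
        (P.isoLeftDerivedObj G n).inv) := P.leftDerived_app_eq α n ▸ ‹_›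
  rw [epi_comp_iff_of_epi (P.isoLeftDerivedObj F n).hom,
    epi_comp_iff_of_isIso _ (P.isoLeftDerivedObj G n).inv] at h
  exact h

end CategoryTheory.ProjectiveResolution

def zmodResolutionComplex (n : ℕ) : ChainComplex (ModuleCat.{0} ℤ) ℕ where
  X
    | 0 | 1 => .of ℤ ℤ
    | _ + 2 => .of ℤ PUnit
  d
    | 1, 0 => ModuleCat.ofHom ((n : ℤ) • LinearMap.id)
    | _, _ => 0
  shape
    | 1, 0, h => absurd rfl h
    | 0, _, _ | 1, _ + 1, _ | _ + 2, _, _ => rfl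
  d_comp_d'
    | _, _, 0, rfl, rfl | _, _, _ + 1, rfl, rfl => zero_comp

instance (n i : ℕ) : Projective ((zmodResolutionComplex n).X i) :=
  match i with
  | 0 | 1 => inferInstanceAs (Projective (ModuleCat.of ℤ ℤ))
  | _ + 2 => (ModuleCat.isZero_of_subsingleton (ModuleCat.of ℤ PUnit)).projective

def zmodResolutionπ (n : ℕ) :
    zmodResolutionComplex n ⟶ (ChainComplex.single₀ _).obj (ModuleCat.of ℤ (ZMod n)) :=
  (ChainComplex.toSingle₀Equiv _ _).symm
    ⟨ModuleCat.ofHom (Int.castAddHom (ZMod n)).toIntLinearMap, by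
      ext
      show ((n * 1 : ℤ) : ZMod n) = 0
      simp⟩

lemma zmodResolutionComplex_exactAt_succ (n : ℕ) [NeZero n] (k : ℕ) :
    (zmodResolutionComplex n).ExactAt (k + 1) := by
  rw [HomologicalComplex.exactAt_iff' _ (k + 2) (k + 1) k (by simp) (by simp),
    ShortComplex.moduleCat_exact_iff]
  match k with
  | 0 =>
    intro (x : ℤ) (hx : (n : ℤ) * x = 0)
    obtain rfl : x = 0 := by simpa [NeZero.ne n] using hx
    exact ⟨0, rfl⟩
  | _ + 1 => exact fun x _ => ⟨0, Subsingleton.elim (α := PUnit) _ _⟩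

def zmodProjectiveResolution (n : ℕ) [NeZero n] :
    ProjectiveResolution (ModuleCat.of ℤ (ZMod n)) where
  complex := zmodResolutionComplex n
  π := zmodResolutionπ n
  quasiIso := ⟨fun
    | 0 => by
      rw [ChainComplex.quasiIsoAt₀_iff, ShortComplex.quasiIso_iff_of_zeros' _ rfl rfl rfl]
      constructor
      · rw [ShortComplex.moduleCat_exact_iff]
        intro (x : ℤ) (hx : ((x : ℤ) : ZMod n) = 0)
        obtain ⟨y, hy⟩ := (ZMod.intCast_zmod_eq_zero_iff_dvd x n).1 hx
        exact ⟨y, hy.symm⟩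
      · rw [ModuleCat.epi_iff_surjective]
        exact ZMod.intCast_surjective
    | k + 1 => by
      rw [quasiIsoAt_iff_exactAt' _ _ (ChainComplex.exactAt_succ_single_obj _ _)]
      exact zmodResolutionComplex_exactAt_succ n k⟩

lemma zmodResolutionComplex_map_d_one_zero {D : Type*} [Category D] [Preadditive D]
    (F : ModuleCat.{0} ℤ ⥤ D) [F.Additive] (n : ℕ) :
    ((F.mapHomologicalComplex _).obj (zmodResolutionComplex n)).d 1 0 = (n : ℤ) • 𝟙 _ := by
  change F.map ((n : ℤ) • 𝟙 (ModuleCat.of ℤ ℤ)) = _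
  rw [F.map_zsmul, F.map_id]
  rfl

lemma zmodResolutionComplex_map_d_two_one {D : Type*} [Category D] [Preadditive D]
    (F : ModuleCat.{0} ℤ ⥤ D) [F.Additive] (n : ℕ) :
    ((F.mapHomologicalComplex _).obj (zmodResolutionComplex n)).d 2 1 = 0 :=
  F.map_zero _ _

theorem exists_lift_nsmul_eq_zero_of_surjective_tor {A B : Type} [AddCommGroup A]
    [AddCommGroup B] (f : A →+ B) (n : ℕ) [NeZero n]
    (h : Function.Surjective ⇑(((Tor (ModuleCat.{0} ℤ) 1).map
      (ModuleCat.ofHom f.toIntLinearMap : ModuleCat.of ℤ A ⟶ ModuleCat.of ℤ B)).app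
        (ModuleCat.of ℤ (ZMod n))))
    (b : B) (hb : n • b = 0) : ∃ a : A, n • a = 0 ∧ f a = b := by
  let f' : ModuleCat.of ℤ A ⟶ ModuleCat.of ℤ B := ModuleCat.ofHom f.toIntLinearMap
  let α := (tensoringLeft (ModuleCat.{0} ℤ)).map f'
  let φ := (NatTrans.mapHomologicalComplex α _).app (zmodProjectiveResolution n).complex
  have : Epi ((NatTrans.leftDerived α 1).app (ModuleCat.of ℤ (ZMod n))) :=
    (ModuleCat.epi_iff_surjective _).2 h
  have := (zmodProjectiveResolution n).epi_homologyMap_of_epi_leftDerived α 1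
  have := HomologicalComplex.epi_cyclesMap_of_epi_homologyMap φ 2 1 (by simp)
    (zmodResolutionComplex_map_d_two_one _ n)
  have hd (M : ModuleCat.{0} ℤ) : ((((tensoringLeft _).obj M).mapHomologicalComplex _).obj
      (zmodProjectiveResolution n).complex).d 1 0 = (n : ℤ) • 𝟙 _ :=
    zmodResolutionComplex_map_d_one_zero _ n
  let y : TensorProduct ℤ B ℤ := b ⊗ₜ 1
  obtain ⟨x, hx, hxy⟩ := HomologicalComplex.exists_lift_of_epi_cyclesMap φ 1 0 (by simp) y (by
    rw [hd]
    change (n : ℤ) • y = 0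
    rw [natCast_zsmul, TensorProduct.smul_tmul', hb, TensorProduct.zero_tmul])
  refine ⟨(ρ_ (ModuleCat.of ℤ A)).hom x, ?_, ?_⟩
  · rw [hd] at hx
    change (n : ℤ) • x = 0 at hx
    calc n • (ρ_ (ModuleCat.of ℤ A)).hom x = (ρ_ (ModuleCat.of ℤ A)).hom ((n : ℤ) • x) :=
          (natCast_zsmul _ _).symm.trans (map_zsmul _ _ _).symm
      _ = 0 := (congrArg _ hx).trans (map_zero _)
  · calc f ((ρ_ (ModuleCat.of ℤ A)).hom x) = (ρ_ (ModuleCat.of ℤ B)).hom ((f' ▷ 𝟙_ _) x) :=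
          (ConcreteCategory.congr_hom (MonoidalCategory.rightUnitor_naturality f') x).symm
      _ = b := by
        change (ρ_ (ModuleCat.of ℤ B)).hom (φ.f 1 x) = b
        rw [hxy, ModuleCat.MonoidalCategory.rightUnitor_hom_apply, one_smul]

end

namespace AddMonoidHom

variable {A B : Type*} [AddCommGroup A] [AddCommGroup B]

def LiftsFrom (f : A →+ B) (C : Type*) [AddCommGroup C] : Prop :=
  ∀ g : C →+ B, ∃ t : C →+ A, f.comp t = g

variable {f : A →+ B}

theorem liftsFrom_of_projective (hf : Function.Surjective f) (P : Type*) [AddCommGroup P]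
    [Module.Projective ℤ P] : f.LiftsFrom P := fun g => by
  obtain ⟨t, ht⟩ := Module.projective_lifting_property f.toIntLinearMap g.toIntLinearMap hf
  exact ⟨t.toAddMonoidHom, congrArg LinearMap.toAddMonoidHom ht⟩

theorem liftsFrom_zmod (n : ℕ) (hn : ∀ b : B, n • b = 0 → ∃ a : A, n • a = 0 ∧ f a = b) :
    f.LiftsFrom (ZMod n) := fun g => by
  obtain ⟨a, ha, hfa⟩ := hn (g 1) <| by
    rw [← map_nsmul, nsmul_eq_mul, mul_one, ZMod.natCast_self, map_zero]
  refine ⟨ZMod.lift n ⟨zmultiplesHom A a, by simpa using ha⟩, ?_⟩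
  ext x
  obtain ⟨z, rfl⟩ := ZMod.intCast_surjective x
  simp only [coe_comp, Function.comp_apply, ZMod.lift_coe, zmultiplesHom_apply, map_zsmul]
  rw [hfa, ← map_zsmul, zsmul_one]

theorem LiftsFrom.prod {C D : Type*} [AddCommGroup C] [AddCommGroup D] (hC : f.LiftsFrom C)
    (hD : f.LiftsFrom D) : f.LiftsFrom (C × D) := fun g => by
  obtain ⟨t₁, h₁⟩ := hC (g.comp (inl C D))
  obtain ⟨t₂, h₂⟩ := hD (g.comp (inr C D))
  exact ⟨t₁.coprod t₂, by rw [comp_coprod, h₁, h₂, coprod_unique]⟩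

theorem LiftsFrom.directSum {ι : Type*} [DecidableEq ι] {C : ι → Type*}
    [∀ i, AddCommGroup (C i)] (h : ∀ i, f.LiftsFrom (C i)) : f.LiftsFrom (⨁ i, C i) := fun g => by
  choose t ht using fun i => h i (g.comp (DirectSum.of C i))
  refine ⟨DirectSum.toAddMonoid t, DirectSum.addHom_ext fun i x => ?_⟩
  simpa using DFunLike.congr_fun (ht i) x

theorem LiftsFrom.exists_section {C : Type*} [AddCommGroup C] (h : f.LiftsFrom C) (e : B ≃+ C) :
    ∃ s : B →+ A, f.comp s = id B := by
  obtain ⟨t, ht⟩ := h e.symm.toAddMonoidHom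
  exact ⟨t.comp e.toAddMonoidHom, by ext b; simpa using DFunLike.congr_fun ht (e b)⟩

theorem exists_section_of_lift_torsion [AddGroup.FG B] (hf : Function.Surjective f)
    (h : ∀ p r : ℕ, p.Prime → 1 ≤ r → ∀ b : B, p ^ r • b = 0 → ∃ a : A, p ^ r • a = 0 ∧ f a = b) :
    ∃ s : B →+ A, f.comp s = id B := by
  classical
  obtain ⟨m, ι, _, p, hp, e, ⟨eB⟩⟩ := AddCommGroup.equiv_free_prod_directSum_zmod B
  refine LiftsFrom.exists_section (.prod (liftsFrom_of_projective hf _)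
    (.directSum fun i => liftsFrom_zmod _ ?_)) eB
  rcases Nat.eq_zero_or_pos (e i) with he | he
  · simp [he]
  · exact h (p i) (e i) (hp i) he

end AddMonoidHom

theorem stmt2_general {A B : Type} [AddCommGroup A] [AddCommGroup B] [AddGroup.FG B]
    (f : A →+ B) (hf : Function.Surjective f)
    (htor : ∀ (p r : ℕ), p.Prime → 1 ≤ r →
      Function.Surjective
        ⇑(((Tor (ModuleCat.{0} ℤ) 1).map
            (show ModuleCat.of ℤ A ⟶ ModuleCat.of ℤ B from ModuleCat.ofHom f.toIntLinearMap)).app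
          (ModuleCat.of ℤ (ZMod (p ^ r))))) :
    ∃ s : B →+ A, f.comp s = AddMonoidHom.id B :=
  f.exists_section_of_lift_torsion hf fun p r hp hr =>
    have : NeZero (p ^ r) := ⟨pow_ne_zero r hp.ne_zero⟩
    exists_lift_nsmul_eq_zero_of_surjective_tor f (p ^ r) (htor p r hp hr)

/-- A surjection `f : A → B` of finitely generated abelian groups such that
`Tor₁(A, ℤ/pʳ) → Tor₁(B, ℤ/pʳ)` is surjective for every prime `p` and every `r ≥ 1`
admits a section. -/
theorem stmt2 {A B : Type} [AddCommGroup A] [AddCommGroup B] [AddGroup.FG A] [AddGroup.FG B]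
    (f : A →+ B) (hf : Function.Surjective f)
    (htor : ∀ (p r : ℕ), p.Prime → 1 ≤ r →
      Function.Surjective
        ⇑(((Tor (ModuleCat.{0} ℤ) 1).map
            (show ModuleCat.of ℤ A ⟶ ModuleCat.of ℤ B from ModuleCat.ofHom f.toIntLinearMap)).app
          (ModuleCat.of ℤ (ZMod (p ^ r))))) :
    ∃ s : B →+ A, f.comp s = AddMonoidHom.id B :=
  stmt2_general f hf htor
end

section
/- Let f : A → B be a homomorphism of finitely generated abelian groups. If the induced maps Hom(B, ℤ/pʳ) → Hom(A, ℤ/pʳ) vanish for all prime powers pʳ and the induced map Hom(B, ℤ) → Hom(A, ℤ) vanishes, then f = 0. -/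
/-- If `f : A → B` is a homomorphism of finitely generated abelian groups such that the dual
maps `Hom(B, ℤ) → Hom(A, ℤ)` and `Hom(B, ℤ/pʳ) → Hom(A, ℤ/pʳ)` (for all primes `p` and all
`r ≥ 1`) all vanish, then `f = 0`. -/
theorem stmt6 {A B : Type} [AddCommGroup A] [AddCommGroup B] [AddGroup.FG A] [AddGroup.FG B]
    (f : A →+ B)
    (hZ : ∀ φ : B →+ ℤ, φ.comp f = 0)
    (hp : ∀ (p r : ℕ), p.Prime → 1 ≤ r → ∀ φ : B →+ ZMod (p ^ r), φ.comp f = 0) :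
    f = 0 := by
  obtain ⟨n, ι, fι, p, hpr, e, ⟨ψ⟩⟩ := AddCommGroup.equiv_free_prod_directSum_zmod B
  ext a
  simp only [AddMonoidHom.zero_apply]
  -- show ψ (f a) = 0
  suffices h : ψ (f a) = 0 by
    have := congrArg ψ.symm h
    simpa using this
  have hfst : ∀ j : Fin n, (ψ (f a)).1 j = 0 := by
    intro j
    have : ((Finsupp.applyAddHom j).comp
        ((AddMonoidHom.fst _ _).comp ψ.toAddMonoidHom)).comp f = 0 := hZ _
    exact congrFun (congrArg DFunLike.coe this) a
  have hsnd : ∀ i : ι, (ψ (f a)).2 i = 0 := by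
    intro i
    rcases Nat.eq_zero_or_pos (e i) with h0 | h1
    · have : Subsingleton (ZMod (p i ^ e i)) := by
        rw [h0, pow_zero]; infer_instance
      exact Subsingleton.elim _ _
    · have : ((DFinsupp.evalAddMonoidHom i).comp
          ((AddMonoidHom.snd _ _).comp ψ.toAddMonoidHom)).comp f = 0 :=
        hp (p i) (e i) (hpr i) h1 _
      exact congrFun (congrArg DFunLike.coe this) a
  apply Prod.ext
  · exact Finsupp.ext hfst
  · exact DFinsupp.ext hsnd
end
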